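/- Suppose M symmetric positive definite, A, B symmetric positive semidefinite, τ, h > 0, and λ_max(A) ≤ C_A, λ_max(B) ≤ C_B, λ_min(M) ≥ C_M h². If τ < 2 C_M h²/(C_A + C_B), then every eigenvalue λ of the block matrix [[M, 0],[0, M]]⁻¹[[M, τA],[−τB, M]] satisfies |λ − 1| < 1; in particular this matrix is invertible. -/

import Mathlib

/-!
Let `z` be an eigenvalue of `P⁻¹Q` with complex eigenvector `(x, y)`, where
`P = [[M, 0], [0, M]]` and `Q = [[M, τA], [-τB, M]]`. Then `M x + τ A y = z M x` and
`-τ B x + M y = z M y`; pairing the first with `x` and the second with `y` and subtracting gives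
`(z - 1) (⟪x, M x⟫ + ⟪y, M y⟫) = τ (⟪x, A y⟫ - ⟪y, B x⟫)`.
By the eigenvalue bounds, the real part of the second factor on the left is at least
`C_M h² (‖x‖² + ‖y‖²)`, while the right side has norm at most
`τ (C_A + C_B) ‖x‖ ‖y‖ ≤ τ (C_A + C_B) (‖x‖² + ‖y‖²) / 2`, whence `‖z - 1‖ < 1`.
In particular `0` is not an eigenvalue, so the matrix is invertible.
-/

open Matrix Module WithLp
open scoped InnerProductSpace

namespace LinearMap.IsSymmetric

variable {𝕜 E : Type*} [RCLike 𝕜] [NormedAddCommGroup E] [InnerProductSpace 𝕜 E]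
  [FiniteDimensional 𝕜 E] {T : E →ₗ[𝕜] E} {n : ℕ}

theorem re_inner_apply_self_eq_sum (hT : T.IsSymmetric) (hn : finrank 𝕜 E = n) (v : E) :
    RCLike.re ⟪v, T v⟫_𝕜 =
      ∑ i, hT.eigenvalues hn i * ‖(hT.eigenvectorBasis hn).repr v i‖ ^ 2 := by
  rw [← (hT.eigenvectorBasis hn).repr.inner_map_map, PiLp.inner_apply, map_sum]
  refine Finset.sum_congr rfl fun i _ => ?_
  rw [hT.eigenvectorBasis_apply_self_apply, RCLike.inner_apply, mul_assoc, RCLike.mul_conj,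
    ← RCLike.ofReal_pow, ← RCLike.ofReal_mul, RCLike.ofReal_re]

theorem norm_sq_apply_eq_sum (hT : T.IsSymmetric) (hn : finrank 𝕜 E = n) (v : E) :
    ‖T v‖ ^ 2 = ∑ i, hT.eigenvalues hn i ^ 2 * ‖(hT.eigenvectorBasis hn).repr v i‖ ^ 2 := by
  rw [← (hT.eigenvectorBasis hn).repr.norm_map, EuclideanSpace.norm_sq_eq]
  simp_rw [hT.eigenvectorBasis_apply_self_apply, norm_mul, RCLike.norm_ofReal, mul_pow, sq_abs]

theorem mul_norm_sq_le_re_inner_apply_self (hT : T.IsSymmetric) (hn : finrank 𝕜 E = n)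
    {m : ℝ} (hm : ∀ i, m ≤ hT.eigenvalues hn i) (v : E) :
    m * ‖v‖ ^ 2 ≤ RCLike.re ⟪v, T v⟫_𝕜 := by
  rw [hT.re_inner_apply_self_eq_sum hn, ← (hT.eigenvectorBasis hn).repr.norm_map,
    EuclideanSpace.norm_sq_eq, Finset.mul_sum]
  exact Finset.sum_le_sum fun i _ => by gcongr; exact hm i

theorem norm_apply_le (hT : T.IsSymmetric) (hn : finrank 𝕜 E = n) {c : ℝ} (hc : 0 ≤ c)
    (hT_le : ∀ i, |hT.eigenvalues hn i| ≤ c) (v : E) :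
    ‖T v‖ ≤ c * ‖v‖ := by
  refine pow_le_pow_iff_left₀ (norm_nonneg _) (by positivity) two_ne_zero |>.mp ?_
  rw [hT.norm_sq_apply_eq_sum hn, mul_pow, ← (hT.eigenvectorBasis hn).repr.norm_map,
    EuclideanSpace.norm_sq_eq, Finset.mul_sum]
  refine Finset.sum_le_sum fun i _ => mul_le_mul_of_nonneg_right ?_ (sq_nonneg _)
  exact sq_le_sq' (abs_le.mp (hT_le i)).1 (abs_le.mp (hT_le i)).2

end LinearMap.IsSymmetric

namespace Matrix.IsHermitian

variable {𝕜 ι : Type*} [RCLike 𝕜]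

theorem map_algebraMap {S : Matrix ι ι ℝ} (hS : S.IsHermitian) :
    (S.map (algebraMap ℝ 𝕜)).IsHermitian :=
  hS.map _ fun _ => by simp

variable [Fintype ι] [DecidableEq ι]

theorem eigenvalues_eq_eigenvalues_toEuclideanLin {S : Matrix ι ι 𝕜} (hS : S.IsHermitian)
    (j : Fin (Fintype.card ι)) :
    hS.eigenvalues (Fintype.equivOfCardEq (Fintype.card_fin _) j) =
      (isSymmetric_toEuclideanLin_iff.mpr hS).eigenvalues finrank_euclideanSpace j := by
  simp [eigenvalues, eigenvalues₀]

theorem mul_norm_sq_le_re_inner_toEuclideanLin {S : Matrix ι ι 𝕜} (hS : S.IsHermitian) {m : ℝ}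
    (hm : ∀ i, m ≤ hS.eigenvalues i) (v : EuclideanSpace 𝕜 ι) :
    m * ‖v‖ ^ 2 ≤ RCLike.re ⟪v, toEuclideanLin S v⟫_𝕜 :=
  (isSymmetric_toEuclideanLin_iff.mpr hS).mul_norm_sq_le_re_inner_apply_self _
    (fun j => hS.eigenvalues_eq_eigenvalues_toEuclideanLin j ▸ hm _) v

theorem norm_toEuclideanLin_le {S : Matrix ι ι 𝕜} (hS : S.IsHermitian) {c : ℝ} (hc : 0 ≤ c)
    (hS_le : ∀ i, |hS.eigenvalues i| ≤ c) (v : EuclideanSpace 𝕜 ι) :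
    ‖toEuclideanLin S v‖ ≤ c * ‖v‖ :=
  (isSymmetric_toEuclideanLin_iff.mpr hS).norm_apply_le _ hc
    (fun j => hS.eigenvalues_eq_eigenvalues_toEuclideanLin j ▸ hS_le _) v

-- Both sides are the sorted roots of the same split real characteristic polynomial.
theorem eigenvalues₀_map_algebraMap {S : Matrix ι ι ℝ} (hS : S.IsHermitian)
    (hS' : (S.map (algebraMap ℝ 𝕜)).IsHermitian) :
    hS'.eigenvalues₀ = hS.eigenvalues₀ := by
  refine List.ofFn_injective ?_
  rw [← hS'.sort_roots_charpoly_eq_eigenvalues₀, ← hS.sort_roots_charpoly_eq_eigenvalues₀,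
    charpoly_map, hS.splits_charpoly.roots_map, Multiset.map_map]
  simp

theorem eigenvalues_map_algebraMap {S : Matrix ι ι ℝ} (hS : S.IsHermitian)
    (hS' : (S.map (algebraMap ℝ 𝕜)).IsHermitian) :
    hS'.eigenvalues = hS.eigenvalues := by
  ext i
  unfold eigenvalues
  rw [eigenvalues₀_map_algebraMap hS hS']

theorem mul_norm_sq_le_re_inner_toEuclideanLin_map {S : Matrix ι ι ℝ} (hS : S.IsHermitian)
    {m : ℝ} (hm : ∀ i, m ≤ hS.eigenvalues i) (v : EuclideanSpace 𝕜 ι) :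
    m * ‖v‖ ^ 2 ≤ RCLike.re ⟪v, toEuclideanLin (S.map (algebraMap ℝ 𝕜)) v⟫_𝕜 :=
  hS.map_algebraMap.mul_norm_sq_le_re_inner_toEuclideanLin
    (by rwa [eigenvalues_map_algebraMap hS]) v

theorem norm_toEuclideanLin_map_le {S : Matrix ι ι ℝ} (hS : S.IsHermitian) {c : ℝ} (hc : 0 ≤ c)
    (hS_le : ∀ i, |hS.eigenvalues i| ≤ c) (v : EuclideanSpace 𝕜 ι) :
    ‖toEuclideanLin (S.map (algebraMap ℝ 𝕜)) v‖ ≤ c * ‖v‖ :=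
  hS.map_algebraMap.norm_toEuclideanLin_le hc (by rwa [eigenvalues_map_algebraMap hS]) v

end Matrix.IsHermitian

section BlockEigen

variable {𝕜 E : Type*} [RCLike 𝕜] [NormedAddCommGroup E] [InnerProductSpace 𝕜 E]
  {M A B : E →ₗ[𝕜] E} {τ : ℝ} {z : 𝕜} {x y : E}

theorem sub_one_mul_inner_add_inner_eq (h₁ : M x + (τ : 𝕜) • A y = z • M x)
    (h₂ : -((τ : 𝕜) • B x) + M y = z • M y) :
    (z - 1) * (⟪x, M x⟫_𝕜 + ⟪y, M y⟫_𝕜) = τ * (⟪x, A y⟫_𝕜 - ⟪y, B x⟫_𝕜) := by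
  have e₁ := congrArg (inner 𝕜 x) h₁
  have e₂ := congrArg (inner 𝕜 y) h₂
  simp only [inner_add_right, inner_neg_right, inner_smul_right] at e₁ e₂
  linear_combination (-1 : 𝕜) * e₁ - e₂

theorem norm_sub_one_lt_one_of_block_eigen {m a b : ℝ} (hτ : 0 ≤ τ)
    (hM : ∀ u, m * ‖u‖ ^ 2 ≤ RCLike.re ⟪u, M u⟫_𝕜)
    (hA : ∀ u, ‖A u‖ ≤ a * ‖u‖) (hB : ∀ u, ‖B u‖ ≤ b * ‖u‖) (hsmall : τ * (a + b) < 2 * m)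
    (h₁ : M x + (τ : 𝕜) • A y = z • M x) (h₂ : -((τ : 𝕜) • B x) + M y = z • M y)
    (hxy : x ≠ 0 ∨ y ≠ 0) :
    ‖z - 1‖ < 1 := by
  obtain ⟨u, hu⟩ : ∃ u : E, u ≠ 0 := hxy.elim (⟨x, ·⟩) (⟨y, ·⟩)
  have hu' := norm_pos_iff.mpr hu
  have ha : 0 ≤ a := nonneg_of_mul_nonneg_left ((norm_nonneg _).trans (hA u)) hu'
  have hb : 0 ≤ b := nonneg_of_mul_nonneg_left ((norm_nonneg _).trans (hB u)) hu'
  have hm : 0 < m := by nlinarith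
  have hpos : 0 < ‖x‖ ^ 2 + ‖y‖ ^ 2 := by
    rcases hxy with hx | hy
    · have := norm_pos_iff.mpr hx; positivity
    · have := norm_pos_iff.mpr hy; positivity
  have hlower : m * (‖x‖ ^ 2 + ‖y‖ ^ 2) ≤ ‖⟪x, M x⟫_𝕜 + ⟪y, M y⟫_𝕜‖ := by
    refine le_trans ?_ (RCLike.re_le_norm _)
    rw [map_add, mul_add]
    exact add_le_add (hM x) (hM y)
  have hupper : ‖⟪x, A y⟫_𝕜 - ⟪y, B x⟫_𝕜‖ ≤ (a + b) * ((‖x‖ ^ 2 + ‖y‖ ^ 2) / 2) :=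
    calc ‖⟪x, A y⟫_𝕜 - ⟪y, B x⟫_𝕜‖ ≤ ‖x‖ * ‖A y‖ + ‖y‖ * ‖B x‖ :=
          (norm_sub_le _ _).trans (add_le_add (norm_inner_le_norm _ _) (norm_inner_le_norm _ _))
      _ ≤ ‖x‖ * (a * ‖y‖) + ‖y‖ * (b * ‖x‖) := by gcongr <;> simp only [hA, hB]
      _ = (a + b) * (2 * ‖x‖ * ‖y‖ / 2) := by ring
      _ ≤ (a + b) * ((‖x‖ ^ 2 + ‖y‖ ^ 2) / 2) := by gcongr; exact two_mul_le_add_sq _ _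
  have key : ‖z - 1‖ * ‖⟪x, M x⟫_𝕜 + ⟪y, M y⟫_𝕜‖ = τ * ‖⟪x, A y⟫_𝕜 - ⟪y, B x⟫_𝕜‖ := by
    rw [← norm_mul, sub_one_mul_inner_add_inner_eq h₁ h₂, norm_mul, RCLike.norm_ofReal,
      abs_of_nonneg hτ]
  refine lt_of_mul_lt_mul_right ?_ (by positivity : 0 ≤ m * (‖x‖ ^ 2 + ‖y‖ ^ 2))
  calc ‖z - 1‖ * (m * (‖x‖ ^ 2 + ‖y‖ ^ 2))
      ≤ ‖z - 1‖ * ‖⟪x, M x⟫_𝕜 + ⟪y, M y⟫_𝕜‖ := by gcongr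
    _ ≤ τ * ((a + b) * ((‖x‖ ^ 2 + ‖y‖ ^ 2) / 2)) := key ▸ by gcongr
    _ < 1 * (m * (‖x‖ ^ 2 + ‖y‖ ^ 2)) := by nlinarith

end BlockEigen

namespace Matrix

variable {ι : Type*} [Fintype ι] [DecidableEq ι]

theorem exists_mulVec_eq_smul_of_mem_spectrum {K : Type*} [Field K] {T : Matrix ι ι K} {z : K}
    (hz : z ∈ spectrum K T) : ∃ v ≠ 0, T *ᵥ v = z • v := by
  rw [← spectrum_toLin', ← Module.End.hasEigenvalue_iff_mem_spectrum] at hz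
  obtain ⟨v, hv⟩ := hz.exists_hasEigenvector
  exact ⟨v, hv.2, hv.apply_eq_smul⟩

theorem toEuclideanLin_of_fromBlocks_mulVec_eq_smul {𝕜 : Type*} [RCLike 𝕜]
    {M A B : Matrix ι ι ℝ} {τ : ℝ} {z : 𝕜} {v : ι ⊕ ι → 𝕜}
    (h : (fromBlocks M (τ • A) (-(τ • B)) M).map (algebraMap ℝ 𝕜) *ᵥ v =
      z • ((fromBlocks M 0 0 M).map (algebraMap ℝ 𝕜) *ᵥ v)) :
    toEuclideanLin (M.map (algebraMap ℝ 𝕜)) (toLp 2 (v ∘ Sum.inl)) +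
          (τ : 𝕜) • toEuclideanLin (A.map (algebraMap ℝ 𝕜)) (toLp 2 (v ∘ Sum.inr)) =
        z • toEuclideanLin (M.map (algebraMap ℝ 𝕜)) (toLp 2 (v ∘ Sum.inl)) ∧
      -((τ : 𝕜) • toEuclideanLin (B.map (algebraMap ℝ 𝕜)) (toLp 2 (v ∘ Sum.inl))) +
          toEuclideanLin (M.map (algebraMap ℝ 𝕜)) (toLp 2 (v ∘ Sum.inr)) =
        z • toEuclideanLin (M.map (algebraMap ℝ 𝕜)) (toLp 2 (v ∘ Sum.inr)) := by
  rw [fromBlocks_map, fromBlocks_map, fromBlocks_mulVec, fromBlocks_mulVec] at h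
  simp only [toLpLin_toLp, toLin'_apply, ← toLp_smul, ← toLp_add, ← toLp_neg]
  constructor <;> congr 1 <;> ext i
  · simpa [mulVec, dotProduct, Finset.mul_sum, mul_assoc, RCLike.real_smul_eq_coe_mul]
      using congrFun h (Sum.inl i)
  · simpa [mulVec, dotProduct, Finset.mul_sum, mul_assoc, RCLike.real_smul_eq_coe_mul]
      using congrFun h (Sum.inr i)

theorem isUnit_det_of_zero_notMem_spectrum_map {T : Matrix ι ι ℝ}
    (h : (0 : ℂ) ∉ spectrum ℂ (T.map ((↑) : ℝ → ℂ))) : IsUnit T.det := by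
  rw [spectrum.zero_mem_iff, not_not, isUnit_iff_isUnit_det] at h
  exact (isUnit_map_iff Complex.ofRealHom _).mp (by rwa [RingHom.map_det])

end Matrix

theorem toLp_comp_inl_ne_zero_or {ι 𝕜 : Type*} [AddCommGroup 𝕜] {v : ι ⊕ ι → 𝕜} (hv : v ≠ 0) :
    toLp 2 (v ∘ Sum.inl) ≠ 0 ∨ toLp 2 (v ∘ Sum.inr) ≠ 0 := by
  simp only [ne_eq, toLp_eq_zero]
  by_contra! h
  exact hv (funext fun i => i.rec (congrFun h.1) (congrFun h.2))

theorem stmt_12_general {n : ℕ} (A B M : Matrix (Fin n) (Fin n) ℝ)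
    (hM : M.PosDef) (hA : A.PosSemidef) (hB : B.PosSemidef)
    (τ h C_A C_B C_M : ℝ) (hτ : 0 < τ)
    (hCA : 0 < C_A) (hCB : 0 < C_B)
    (hAmax : ∀ i, hA.1.eigenvalues i ≤ C_A)
    (hBmax : ∀ i, hB.1.eigenvalues i ≤ C_B)
    (hMmin : ∀ i, C_M * h ^ 2 ≤ hM.1.eigenvalues i)
    (hsmall : τ < 2 * C_M * h ^ 2 / (C_A + C_B)) :
    (∀ z ∈ spectrum ℂ
        (((Matrix.fromBlocks M 0 0 M)⁻¹ *
          Matrix.fromBlocks M (τ • A) (-(τ • B)) M).map ((↑) : ℝ → ℂ)),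
      ‖z - 1‖ < 1) ∧
    IsUnit ((Matrix.fromBlocks M 0 0 M)⁻¹ *
        Matrix.fromBlocks M (τ • A) (-(τ • B)) M).det := by
  set P := fromBlocks M 0 0 M
  set Q := fromBlocks M (τ • A) (-(τ • B)) M
  have hP : IsUnit P.det := by simpa [P, det_fromBlocks_zero₂₁] using hM.det_pos.ne'
  have hspec : ∀ z ∈ spectrum ℂ ((P⁻¹ * Q).map ((↑) : ℝ → ℂ)), ‖z - 1‖ < 1 := by
    intro z hz
    obtain ⟨v, hv, hTv⟩ := exists_mulVec_eq_smul_of_mem_spectrum hz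
    have hQv : Q.map (algebraMap ℝ ℂ) *ᵥ v = z • (P.map (algebraMap ℝ ℂ) *ᵥ v) := by
      have hTv' : (P⁻¹ * Q).map (algebraMap ℝ ℂ) *ᵥ v = z • v := hTv
      rw [← mul_nonsing_inv_cancel_left P Q hP, Matrix.map_mul, ← mulVec_mulVec, hTv',
        mulVec_smul]
    obtain ⟨h₁, h₂⟩ := toEuclideanLin_of_fromBlocks_mulVec_eq_smul hQv
    refine norm_sub_one_lt_one_of_block_eigen hτ.le
      (hM.1.mul_norm_sq_le_re_inner_toEuclideanLin_map hMmin)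
      (hA.1.norm_toEuclideanLin_map_le hCA.le
        fun i => (abs_of_nonneg (hA.eigenvalues_nonneg i)).trans_le (hAmax i))
      (hB.1.norm_toEuclideanLin_map_le hCB.le
        fun i => (abs_of_nonneg (hB.eigenvalues_nonneg i)).trans_le (hBmax i))
      ?_ h₁ h₂ (toLp_comp_inl_ne_zero_or hv)
    rw [lt_div_iff₀ (by positivity)] at hsmall
    linarith
  exact ⟨hspec, isUnit_det_of_zero_notMem_spectrum_map fun h0 => by simpa using hspec 0 h0⟩

/-- If `τ < 2C_M h²/(C_A + C_B)`, every eigenvalue `λ` of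
`[[M,0],[0,M]]⁻¹[[M, τA],[−τB, M]]` satisfies `|λ − 1| < 1`; in particular,
this matrix is invertible. -/
theorem stmt_12 {n : ℕ} (A B M : Matrix (Fin n) (Fin n) ℝ)
    (hM : M.PosDef) (hA : A.PosSemidef) (hB : B.PosSemidef)
    (τ h C_A C_B C_M : ℝ) (hτ : 0 < τ) (hh : 0 < h)
    (hCA : 0 < C_A) (hCB : 0 < C_B) (hCM : 0 < C_M)
    (hAmax : ∀ i, hA.1.eigenvalues i ≤ C_A)
    (hBmax : ∀ i, hB.1.eigenvalues i ≤ C_B)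
    (hMmin : ∀ i, C_M * h ^ 2 ≤ hM.1.eigenvalues i)
    (hsmall : τ < 2 * C_M * h ^ 2 / (C_A + C_B)) :
    (∀ z ∈ spectrum ℂ
        (((Matrix.fromBlocks M 0 0 M)⁻¹ *
          Matrix.fromBlocks M (τ • A) (-(τ • B)) M).map ((↑) : ℝ → ℂ)),
      ‖z - 1‖ < 1) ∧
    IsUnit ((Matrix.fromBlocks M 0 0 M)⁻¹ *
        Matrix.fromBlocks M (τ • A) (-(τ • B)) M).det :=
  stmt_12_general A B M hM hA hB τ h C_A C_B C_M hτ hCA hCB hAmax hBmax hMmin hsmall
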